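/- arXiv:1607.01428 — 2 statements merged into one kernel-verified Lean document; each statement's English description precedes it below -/
import Mathlib

section
/- For m ∈ ℤ_p, the binomial series (1+X)^m = 1 + Σ_{i≥1} (m(m-1)···(m-i+1)/i!)·X^i has all coefficients in ℤ_p, and for any p-power root of unity ζ in ℂ_p, evaluating the series at X = ζ - 1 yields ζ^c where c is any nonnegative integer congruent to m modulo the order of ζ. -/
open scoped Classical

/-- The `i`-th coefficient `m(m-1)⋯(m-i+1)/i!` of the binomial series `(1+X)^m`
for a `p`-adic integer exponent `m`. -/
noncomputable def binomCoeff {p : ℕ} [Fact p.Prime] (m : ℤ_[p]) (i : ℕ) : ℚ_[p] :=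
  (∏ j ∈ Finset.range i, ((m : ℚ_[p]) - (j : ℚ_[p]))) / (i.factorial : ℚ_[p])

/-!
The coefficients `binomCoeff m i` depend continuously on `m` and are ordinary binomial
coefficients for `m ∈ ℕ`; since `ℕ` is dense in `ℤ_p`, they are `p`-adic integers. For a
`p`-power root of unity `ζ` one has `‖ζ - 1‖ < 1` (induction on `k` with `ζ^p - 1 = (ζ - 1)^p + p·(…)`), so the
series `F(m) = Σ binomCoeff m i (ζ - 1)^i` converges uniformly in `m` and `F` is continuous.
On `ℕ` it is `F(n) = ζ^n`, hence `F` is constant on the dense set `c + ord(ζ)·ℕ` of the coset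
`c + ord(ζ)·ℤ_p`, which contains `m`.
-/

section Ultrametric

variable {K : Type*} [NormedField K] [IsUltrametricDist K] {p : ℕ}

lemma norm_sub_one_lt_one_of_norm_pow_sub_one_lt_one (hp : p.Prime) (hpK : ‖(p : K)‖ < 1)
    {ζ : K} (hζ : ‖ζ‖ ≤ 1) (h : ‖ζ ^ p - 1‖ < 1) : ‖ζ - 1‖ < 1 := by
  have hx : ‖ζ - 1‖ ≤ 1 := by
    rw [sub_eq_add_neg]
    exact (IsUltrametricDist.norm_add_le_max ζ (-1)).trans (by simpa using hζ)
  set x := ζ - 1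
  set S := ∑ k ∈ Finset.Ioo 0 p, x ^ k * 1 ^ (p - k) * ((p.choose k / p : ℕ) : K)
  have hS : ‖S‖ ≤ 1 := by
    refine IsUltrametricDist.norm_sum_le_of_forall_le_of_nonneg zero_le_one fun k _ => ?_
    rw [one_pow, mul_one, norm_mul, norm_pow]
    exact mul_le_one₀ (pow_le_one₀ (norm_nonneg x) hx) (norm_nonneg _)
      (IsUltrametricDist.norm_natCast_le_one K _)
  have hxp : x ^ p = (ζ ^ p - 1) + -(p * S) := by
    have := add_pow_prime_eq' hp x 1
    rw [sub_add_cancel, one_pow] at this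
    rw [this]; ring
  have hpS : ‖(p : K) * S‖ < 1 := by
    rw [norm_mul]
    exact mul_lt_one_of_nonneg_of_lt_one_left (norm_nonneg _) hpK hS
  have hxp_lt : ‖x‖ ^ p < 1 := by
    rw [← norm_pow, hxp]
    exact (IsUltrametricDist.norm_add_le_max _ _).trans_lt (max_lt h (by rwa [norm_neg]))
  exact (pow_lt_one_iff_of_nonneg (norm_nonneg x) hp.ne_zero).mp hxp_lt

lemma norm_sub_one_lt_one_of_pow_prime_pow_eq_one (hp : p.Prime) (hpK : ‖(p : K)‖ < 1)
    {ζ : K} {k : ℕ} (h : ζ ^ p ^ k = 1) : ‖ζ - 1‖ < 1 := by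
  induction k generalizing ζ with
  | zero => simp_all
  | succ k ih =>
    have hζ : ‖ζ‖ = 1 := by
      rw [← pow_eq_one_iff_of_nonneg (norm_nonneg ζ) (pow_ne_zero _ hp.ne_zero), ← norm_pow, h,
        norm_one]
    refine norm_sub_one_lt_one_of_norm_pow_sub_one_lt_one hp hpK hζ.le (ih ?_)
    rw [← pow_mul, ← pow_succ', h]

end Ultrametric

section BinomCoeff

variable {p : ℕ} [Fact p.Prime]

lemma binomCoeff_natCast (n i : ℕ) : binomCoeff (n : ℤ_[p]) i = (n.choose i : ℚ_[p]) := by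
  rw [binomCoeff, PadicInt.coe_natCast, ← descPochhammer_eval_eq_prod_range,
    descPochhammer_eval_eq_descFactorial, Nat.descFactorial_eq_factorial_mul_choose,
    Nat.cast_mul, mul_div_cancel_left₀ _ (by exact_mod_cast i.factorial_ne_zero)]

lemma continuous_binomCoeff (i : ℕ) : Continuous fun m : ℤ_[p] => binomCoeff m i :=
  (continuous_finsetProd _ fun _ _ =>
    continuous_subtype_val.sub continuous_const).div_const _

lemma norm_binomCoeff_le_one (m : ℤ_[p]) (i : ℕ) : ‖binomCoeff m i‖ ≤ 1 := by
  have hclosed : IsClosed {m : ℤ_[p] | ‖binomCoeff m i‖ ≤ 1} :=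
    isClosed_le (continuous_binomCoeff i).norm continuous_const
  refine PadicInt.denseRange_natCast.induction_on m hclosed fun n => ?_
  rw [binomCoeff_natCast]
  exact_mod_cast Padic.norm_int_le_one (n.choose i : ℤ)

lemma PadicInt.eq_of_forall_natCast {X : Type*} [TopologicalSpace X] [T2Space X]
    {f : ℤ_[p] → X} (hf : Continuous f) (a d : ℤ_[p]) {x : X}
    (h : ∀ n : ℕ, f (a + d * n) = x) (u : ℤ_[p]) : f (a + d * u) = x :=
  congrFun (PadicInt.denseRange_natCast.equalizer
    (hf.comp (by fun_prop : Continuous fun y : ℤ_[p] => a + d * y)) continuous_const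
    (funext h)) u

end BinomCoeff

section BinomialSeries

variable {p : ℕ} [Fact p.Prime] {K : Type*} [NormedField K] [Algebra ℚ_[p] K]

variable (K) in
noncomputable def padicBinomialSeries (m : ℤ_[p]) (t : K) : K :=
  ∑' i, algebraMap ℚ_[p] K (binomCoeff m i) * t ^ i

lemma padicBinomialSeries_natCast (n : ℕ) (t : K) :
    padicBinomialSeries K (n : ℤ_[p]) t = (1 + t) ^ n := by
  have hterm : ∀ i, algebraMap ℚ_[p] K (binomCoeff (n : ℤ_[p]) i) * t ^ i =
      t ^ i * 1 ^ (n - i) * (n.choose i : K) := by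
    intro i
    rw [binomCoeff_natCast, map_natCast, one_pow]
    ring
  rw [padicBinomialSeries, tsum_eq_sum (s := Finset.range (n + 1)), add_comm (1 : K), add_pow]
  · exact Finset.sum_congr rfl fun i _ => hterm i
  · intro i hi
    rw [hterm, Nat.choose_eq_zero_of_lt (by simpa using hi), Nat.cast_zero, mul_zero]

variable (hiso : ∀ a : ℚ_[p], ‖algebraMap ℚ_[p] K a‖ = ‖a‖)
include hiso

lemma norm_padicBinomialSeries_term_le (m : ℤ_[p]) (t : K) (i : ℕ) :
    ‖algebraMap ℚ_[p] K (binomCoeff m i) * t ^ i‖ ≤ ‖t‖ ^ i := by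
  rw [norm_mul, hiso, norm_pow]
  exact mul_le_of_le_one_left (by positivity) (norm_binomCoeff_le_one m i)

variable [CompleteSpace K] {t : K}

lemma hasSum_padicBinomialSeries (ht : ‖t‖ < 1) (m : ℤ_[p]) :
    HasSum (fun i => algebraMap ℚ_[p] K (binomCoeff m i) * t ^ i) (padicBinomialSeries K m t) :=
  (Summable.of_norm_bounded (summable_geometric_of_lt_one (norm_nonneg t) ht)
    (norm_padicBinomialSeries_term_le hiso m t)).hasSum

lemma continuous_padicBinomialSeries (ht : ‖t‖ < 1) :
    Continuous fun m : ℤ_[p] => padicBinomialSeries K m t := by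
  have hmap : Continuous (algebraMap ℚ_[p] K) :=
    (AddMonoidHomClass.isometry_of_norm _ hiso).continuous
  exact continuous_tsum (fun i => (hmap.comp (continuous_binomCoeff i)).mul continuous_const)
    (summable_geometric_of_lt_one (norm_nonneg t) ht)
    (fun i m => norm_padicBinomialSeries_term_le hiso m t i)

end BinomialSeries

/-- For `m ∈ ℤ_p`, the binomial series
`(1+X)^m = 1 + Σ_{i≥1} (m(m-1)⋯(m-i+1)/i!)·X^i` has all coefficients in `ℤ_p`
(i.e. of norm at most `1`), and for any `p`-power root of unity `ζ`, the series
evaluated at `X = ζ - 1` sums to `ζ^c` for any natural number `c ≡ m` modulo the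
order of `ζ`. -/
theorem binomial_series_integral_coeffs_and_eval_at_root_of_unity
    {p : ℕ} [Fact p.Prime]
    {K : Type*} [NormedField K] [IsUltrametricDist K] [CompleteSpace K]
    [Algebra ℚ_[p] K] (hiso : ∀ a : ℚ_[p], ‖algebraMap ℚ_[p] K a‖ = ‖a‖)
    (m : ℤ_[p]) :
    (∀ i : ℕ, ‖binomCoeff m i‖ ≤ 1) ∧
    ∀ ζ : K, (∃ k : ℕ, ζ ^ p ^ k = 1) → ∀ c : ℕ, ((orderOf ζ : ℤ_[p]) ∣ m - (c : ℤ_[p])) →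
      HasSum (fun i : ℕ => algebraMap ℚ_[p] K (binomCoeff m i) * (ζ - 1) ^ i) (ζ ^ c) := by
  refine ⟨norm_binomCoeff_le_one m, ?_⟩
  rintro ζ ⟨k, hk⟩ c ⟨u, hu⟩
  have hpK : ‖(p : K)‖ < 1 := by
    rw [← map_natCast (algebraMap ℚ_[p] K), hiso]
    exact Padic.norm_p_lt_one
  have hζ : ‖ζ - 1‖ < 1 :=
    norm_sub_one_lt_one_of_pow_prime_pow_eq_one Fact.out hpK hk
  have hperiodic : ∀ n : ℕ,
      padicBinomialSeries K ((c : ℤ_[p]) + (orderOf ζ : ℤ_[p]) * (n : ℤ_[p])) (ζ - 1) = ζ ^ c := by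
    intro n
    rw [← Nat.cast_mul, ← Nat.cast_add, padicBinomialSeries_natCast, add_sub_cancel, pow_add,
      pow_mul, pow_orderOf_eq_one, one_pow, mul_one]
  have hm : m = c + orderOf ζ * u := sub_eq_iff_eq_add'.mp hu
  have hsum := PadicInt.eq_of_forall_natCast (continuous_padicBinomialSeries hiso hζ) _ _
    hperiodic u
  rw [← hm] at hsum
  exact hsum ▸ hasSum_padicBinomialSeries hiso hζ m
end

section
/- Let g be a positive integer, ξ a root of unity generating a Galois extension F[ξ]/F of degree g, m ∈ ℤ_p, and φ ∈ O_F[[X,Y]] irreducible with φ(0,0) = 0. If φ(X,Y)^g = (∏_{σ ∈ Gal(F[ξ]/F)} ((X+1)^m - σ(ξ)(Y+1))) · Θ(X,Y) for some Θ ∈ O_F[[X,Y]], then ξ = 1, g = 1, and φ is a unit multiple of (X+1)^m - (Y+1). -/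
open scoped Classical

/-- The two-variable power series `(1+X)^m` (binomial series in the first variable). -/
noncomputable def binomX {p : ℕ} [Fact p.Prime] {K : Type*} [NormedField K]
    [Algebra ℚ_[p] K] (m : ℤ_[p]) : MvPowerSeries (Fin 2) K :=
  fun d => if d 1 = 0 then algebraMap ℚ_[p] K (binomCoeff m (d 0)) else 0

/-- The two-variable power series `Y + 1`. -/
noncomputable def yPlusOne {K : Type*} [NormedField K] : MvPowerSeries (Fin 2) K :=
  MvPowerSeries.X 1 + 1

/-!
Work over the closed unit ball `𝒪` of `K` and write
`fⱼ = (X+1)^m - ξⱼ (Y+1) = -ξⱼ (Y - hⱼ)` with `hⱼ = ξⱼ⁻¹ (X+1)^m - 1`. Since `ξⱼ` is a `p`-power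
root of unity, `‖ξⱼ - 1‖ < 1`, so the constant coefficient of `hⱼ` is topologically nilpotent and
`Y ↦ hⱼ` is a continuous ring endomorphism of `𝒪⟦X,Y⟧`, whose kernel is generated by `Y - hⱼ`.
It kills `fⱼ`, hence `φ ^ g` and `φ`; so every `Y - hⱼ`, and as the `hⱼ` are distinct also
`G = ∏ⱼ fⱼ`, divides `φ`. The coefficients of `G` and of `φ / G` are integral and lie in the
fraction field of `O`, hence in `O`. The constant coefficient `∏ⱼ (1 - ξⱼ)` of `G` is not a unit,
so irreducibility makes `φ / G` a unit, and `φ(0,0) = 0` forces some `ξⱼ = 1`. Then `ξ = 1`,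
all its conjugates are `1`, and `g = 1`.
-/

namespace MvPowerSeries

open WithPiTopology Filter Topology

def IndepOf {σ R : Type*} [Semiring R] (i : σ) (f : MvPowerSeries σ R) : Prop :=
  ∀ d : σ →₀ ℕ, d i ≠ 0 → coeff d f = 0

variable {σ R : Type*} [CommRing R] [UniformSpace R] [IsLinearTopology R R] [DecidableEq σ]

lemma hasEval_update_X (i : σ) {h : MvPowerSeries σ R}
    (hh : IsTopologicallyNilpotent (constantCoeff h)) : HasEval (Function.update X i h) where
  hpow s := by
    rcases eq_or_ne s i with rfl | hs
    · simpa using LinearTopology.isTopologicallyNilpotent_of_constantCoeff hh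
    · simpa [hs] using HasEval.X.hpow s
  tendsto_zero :=
    HasEval.X.tendsto_zero.congr' (Function.update_eventuallyEq_cofinite X i h).symm

variable [IsUniformAddGroup R] [IsTopologicalRing R] [CompleteSpace R] [T2Space R]

noncomputable def substVar (i : σ) (h : MvPowerSeries σ R)
    (hh : IsTopologicallyNilpotent (constantCoeff h)) :
    MvPowerSeries σ R →+* MvPowerSeries σ R :=
  eval₂Hom continuous_C (hasEval_update_X i hh)

section

variable {i : σ} {h : MvPowerSeries σ R} (hh : IsTopologicallyNilpotent (constantCoeff h))

lemma continuous_substVar : Continuous (substVar i h hh) := by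
  simpa [substVar, coe_eval₂Hom] using continuous_eval₂ continuous_C (hasEval_update_X i hh)

lemma substVar_C (r : R) : substVar i h hh (C r) = C r := by
  simp [substVar, coe_eval₂Hom]

lemma substVar_X_self : substVar i h hh (X i) = h := by
  simp [substVar, coe_eval₂Hom]

lemma substVar_of_indepOf {f : MvPowerSeries σ R} (hf : IndepOf i f) :
    substVar i h hh f = f := by
  rw [substVar, coe_eval₂Hom, eval₂_eq_tsum continuous_C (hasEval_update_X i hh)]
  refine ((hasSum_of_monomials_self f).congr_fun fun d => ?_).tsum_eq
  by_cases hd : d i = 0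
  · rw [monomial_eq']
    congr 1
    refine Finsupp.prod_congr fun s hs => ?_
    rw [Function.update_of_ne]
    rintro rfl
    exact Finsupp.mem_support_iff.mp hs hd
  · simp [hf d hd]

lemma substVar_X_sub {k : MvPowerSeries σ R} (hk : IndepOf i k) :
    substVar i h hh (X i - k) = h - k := by
  rw [map_sub, substVar_X_self, substVar_of_indepOf hh hk]

end

variable {i : σ}

lemma substVar_X_self_eq_id
    (hX : IsTopologicallyNilpotent (constantCoeff (X i : MvPowerSeries σ R))) :
    substVar i (X i) hX = RingHom.id _ := by
  refine DFunLike.coe_injective ?_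
  rw [substVar, coe_eval₂Hom, Function.update_eq_self]
  refine (eval₂_unique continuous_C HasEval.X continuous_id fun p => ?_).symm
  have : MvPolynomial.eval₂Hom (C (σ := σ) (R := R)) X = MvPolynomial.coeToMvPowerSeries.ringHom :=
    MvPolynomial.ringHom_ext (by simp) (by simp)
  exact (congrArg (· p) this).symm

lemma substVar_substVar {h₁ h₂ h₃ : MvPowerSeries σ R}
    (hh₁ : IsTopologicallyNilpotent (constantCoeff h₁))
    (hh₂ : IsTopologicallyNilpotent (constantCoeff h₂))
    (hh₃ : IsTopologicallyNilpotent (constantCoeff h₃)) (he : substVar i h₂ hh₂ h₁ = h₃)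
    (f : MvPowerSeries σ R) :
    substVar i h₂ hh₂ (substVar i h₁ hh₁ f) = substVar i h₃ hh₃ f := by
  have := comp_eval₂ continuous_C (hasEval_update_X i hh₁) (continuous_substVar (i := i) hh₂)
  simp only [substVar, coe_eval₂Hom] at this he ⊢
  rw [← Function.comp_apply (f := eval₂ _ _), this]
  congr 1
  · ext r : 1
    exact substVar_C hh₂ r
  · funext s
    rcases eq_or_ne s i with rfl | hs
    · simpa using he
    · simp [hs]

lemma X_dvd_of_substVar_zero_eq_zero
    (h0 : IsTopologicallyNilpotent (constantCoeff (0 : MvPowerSeries σ R)))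
    {f : MvPowerSeries σ R} (hf : substVar i 0 h0 f = 0) : X i ∣ f := by
  set f₀ : MvPowerSeries σ R := fun d => if d i = 0 then coeff d f else 0
  have hcoeff : ∀ d, coeff d f₀ = if d i = 0 then coeff d f else 0 := fun _ => rfl
  have hf₀ : IndepOf i f₀ := fun d hd => by rw [hcoeff, if_neg hd]
  obtain ⟨f', hf'⟩ : X i ∣ f - f₀ := X_dvd_iff.mpr fun d hd => by
    rw [map_sub, hcoeff, if_pos hd, sub_self]
  have : f₀ = 0 := by
    rw [← hf, eq_add_of_sub_eq hf', map_add, map_mul, substVar_X_self, zero_mul, zero_add,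
      substVar_of_indepOf h0 hf₀]
  rw [eq_add_of_sub_eq hf', this, add_zero]
  exact dvd_mul_right _ _

/-- Conjugating by the automorphism `X i ↦ X i + k` reduces this to the case `k = 0`. -/
theorem X_sub_dvd_of_substVar_eq_zero {k : MvPowerSeries σ R} (hk : IndepOf i k)
    (hk0 : IsTopologicallyNilpotent (constantCoeff k)) {f : MvPowerSeries σ R}
    (hf : substVar i k hk0 f = 0) : X i - k ∣ f := by
  have h0 : IsTopologicallyNilpotent (constantCoeff (0 : MvPowerSeries σ R)) := by
    simpa using IsTopologicallyNilpotent.zero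
  have hX : IsTopologicallyNilpotent (constantCoeff (X i : MvPowerSeries σ R)) := by
    simpa using IsTopologicallyNilpotent.zero
  have hplus : IsTopologicallyNilpotent (constantCoeff (X i + k)) := by simpa using hk0
  have hminus : IsTopologicallyNilpotent (constantCoeff (X i - k)) := by
    simpa using hk0.mul_left (-1)
  obtain ⟨g, hg⟩ : X i ∣ substVar i (X i + k) hplus f := by
    refine X_dvd_of_substVar_zero_eq_zero h0 ?_
    rw [substVar_substVar hplus h0 hk0 (by simp [substVar_X_self, substVar_of_indepOf h0 hk]), hf]
  have hinv : substVar i (X i - k) hminus (substVar i (X i + k) hplus f) = f := by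
    rw [substVar_substVar hplus hminus hX
      (by simp [substVar_X_self, substVar_of_indepOf hminus hk]), substVar_X_self_eq_id]
    rfl
  rw [← hinv, hg, map_mul, substVar_X_self]
  exact dvd_mul_right _ _

theorem prod_X_sub_dvd_of_dvd_pow [IsDomain R] {ι : Type*} [Fintype ι]
    {k : ι → MvPowerSeries σ R} (hk : Function.Injective k) (hind : ∀ j, IndepOf i (k j))
    (hnil : ∀ j, IsTopologicallyNilpotent (constantCoeff (k j))) {f : MvPowerSeries σ R} {n : ℕ}
    (hdvd : ∏ j, (X i - k j) ∣ f ^ n) : ∏ j, (X i - k j) ∣ f := by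
  have hzero : ∀ j, substVar i (k j) (hnil j) f = 0 := fun j => by
    obtain ⟨q, hq⟩ := hdvd
    refine eq_zero_of_pow_eq_zero (n := n) ?_
    rw [← map_pow, hq, map_mul, map_prod, Finset.prod_eq_zero (Finset.mem_univ j), zero_mul]
    rw [substVar_X_sub _ (hind j), sub_self]
  suffices ∀ s : Finset ι, ∏ j ∈ s, (X i - k j) ∣ f from this Finset.univ
  intro s
  induction s using Finset.induction_on with
  | empty => simp
  | insert a s has ih =>
    obtain ⟨q, rfl⟩ := ih
    have hq : substVar i (k a) (hnil a) q = 0 := by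
      have := hzero a
      rw [map_mul, map_prod, Finset.prod_congr rfl fun j _ => substVar_X_sub _ (hind j)] at this
      refine (mul_eq_zero.mp this).resolve_left (Finset.prod_ne_zero_iff.mpr fun j hj => ?_)
      exact sub_ne_zero.mpr (hk.ne (ne_of_mem_of_not_mem hj has).symm)
    rw [Finset.prod_insert has, mul_comm]
    exact mul_dvd_mul_left _ (X_sub_dvd_of_substVar_eq_zero (hind a) (hnil a) hq)

end MvPowerSeries

lemma Subring.isLinearTopology_of_norm_le_one {R : Type*} [NormedRing R] [IsUltrametricDist R]
    (S : Subring R) (hS : ∀ x ∈ S, ‖x‖ ≤ 1) : IsLinearTopology S S := by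
  refine isLinearTopology_iff_hasBasis_ideal.mpr
    ⟨fun U => ⟨fun hU => ?_, fun ⟨I, hI, hIU⟩ => Filter.mem_of_superset hI hIU⟩⟩
  obtain ⟨ε, hε, hεU⟩ := Metric.mem_nhds_iff.mp hU
  let I : Ideal S :=
    { carrier := Metric.ball 0 ε
      add_mem' := fun {a b} ha hb => by
        simp only [Metric.mem_ball, dist_zero_right] at *
        exact (IsUltrametricDist.norm_add_le_max a b).trans_lt (max_lt ha hb)
      zero_mem' := Metric.mem_ball_self hε
      smul_mem' := fun c x hx => by
        simp only [Metric.mem_ball, dist_zero_right, smul_eq_mul] at *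
        calc ‖c * x‖ ≤ ‖c‖ * ‖x‖ := norm_mul_le _ _
          _ ≤ 1 * ‖x‖ := by gcongr; exact hS _ c.2
          _ < ε := by rwa [one_mul] }
  exact ⟨I, Metric.ball_mem_nhds 0 hε, hεU⟩

namespace MvPowerSeries

variable {σ : Type*}

theorem map_injective {R S : Type*} [Semiring R] [Semiring S] (f : R →+* S)
    (hf : Function.Injective f) : Function.Injective (map (σ := σ) f) := fun F G h =>
  ext fun d => hf (by simpa [coeff_map] using congrArg (coeff d) h)

theorem exists_map_subtype_eq {R : Type*} [Ring R] (S : Subring R) {f : MvPowerSeries σ R}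
    (hf : ∀ d, coeff d f ∈ S) : ∃ f' : MvPowerSeries σ S, map S.subtype f' = f :=
  ⟨fun d => ⟨coeff d f, hf d⟩, by ext d; rfl⟩

/-- Applying an `L`-linear retraction `K → L` coefficientwise gives a second solution with
coefficients in `L`, and `K⟦σ⟧` is a domain. -/
theorem coeff_mem_of_mul_eq {K : Type*} [Field K] (L : Subfield K) {a b c : MvPowerSeries σ K}
    (ha : ∀ d, coeff d a ∈ L) (hb : ∀ d, coeff d b ∈ L) (hb0 : b ≠ 0) (habc : b * c = a)
    (d : σ →₀ ℕ) : coeff d c ∈ L := by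
  obtain ⟨π, hπ⟩ := LinearMap.exists_leftInverse_of_injective (Algebra.linearMap L K)
    (LinearMap.ker_eq_bot.mpr (algebraMap L K).injective)
  have hπL : ∀ x (hx : x ∈ L), (π x : K) = x := fun x hx =>
    congrArg Subtype.val (LinearMap.congr_fun hπ ⟨x, hx⟩)
  set c' : MvPowerSeries σ K := fun e => π (coeff e c)
  have hc' : b * c' = a := by
    ext e
    rw [← hπL _ (ha e), ← habc, coeff_mul, coeff_mul, map_sum, AddSubmonoidClass.coe_finsetSum]
    refine Finset.sum_congr rfl fun x _ => ?_
    have : coeff x.1 b * coeff x.2 c = (⟨coeff x.1 b, hb x.1⟩ : L) • coeff x.2 c := rfl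
    rw [this, map_smul]
    rfl
  rw [mul_left_cancel₀ hb0 (habc.trans hc'.symm)]
  exact (π (coeff d c)).2

end MvPowerSeries

section IntegralSubring

open MvPowerSeries

variable {K : Type*} [NormedField K] (O : Subring K)

lemma Subring.mem_of_mem_closure_of_norm_le_one
    (hval : ∀ x y : K, x ∈ O → y ∈ O → y ≠ 0 → ‖x‖ ≤ ‖y‖ → x / y ∈ O) {x : K}
    (hx : x ∈ Subfield.closure (O : Set K)) (h1 : ‖x‖ ≤ 1) : x ∈ O := by
  obtain ⟨y, hy, z, hz, rfl⟩ := Subfield.mem_closure_iff.mp hx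
  rw [Subring.closure_eq] at hy hz
  rcases eq_or_ne z 0 with rfl | hz0
  · simp
  · refine hval y z hy hz hz0 ?_
    rwa [norm_div, div_le_one (norm_pos_iff.mpr hz0)] at h1

theorem exists_mul_eq_map_of_mul_eq
    (hval : ∀ x y : K, x ∈ O → y ∈ O → y ≠ 0 → ‖x‖ ≤ ‖y‖ → x / y ∈ O) {σ : Type*}
    {φ Θ : MvPowerSeries σ O} (hφ : φ ≠ 0) {n : ℕ}
    {P Q : MvPowerSeries σ K} (hpow : map O.subtype (φ ^ n) = P * map O.subtype Θ)
    (hPQ : map O.subtype φ = P * Q) (hP : ∀ d, ‖coeff d P‖ ≤ 1) (hQ : ∀ d, ‖coeff d Q‖ ≤ 1) :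
    ∃ G Ψ : MvPowerSeries σ O, φ = G * Ψ ∧ map O.subtype G = P := by
  set L := Subfield.closure (O : Set K)
  have hmapL : ∀ (F : MvPowerSeries σ O) d, coeff d (map O.subtype F) ∈ L := fun F d =>
    Subfield.subset_closure (by simp [coeff_map])
  have hinj := map_injective (σ := σ) O.subtype Subtype.val_injective
  have hφ' : map O.subtype φ ≠ 0 := fun h => hφ (hinj (by rw [h, map_zero]))
  have hP0 : P ≠ 0 := by rintro rfl; exact hφ' (by rw [hPQ, zero_mul])
  have hΘ0 : map O.subtype Θ ≠ 0 := fun h => hφ' <| eq_zero_of_pow_eq_zero (n := n) <| by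
    rw [← map_pow, hpow, h, mul_zero]
  have hPL := coeff_mem_of_mul_eq L (hmapL _) (hmapL Θ) hΘ0 (by rw [mul_comm, hpow])
  have hQL := coeff_mem_of_mul_eq L (hmapL φ) hPL hP0 hPQ.symm
  obtain ⟨G, rfl⟩ := exists_map_subtype_eq O fun d =>
    O.mem_of_mem_closure_of_norm_le_one hval (hPL d) (hP d)
  obtain ⟨Ψ, rfl⟩ := exists_map_subtype_eq O fun d =>
    O.mem_of_mem_closure_of_norm_le_one hval (hQL d) (hQ d)
  exact ⟨G, Ψ, hinj (by rw [map_mul, hPQ]), rfl⟩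

lemma norm_prod_lt_one {ι : Type*} [Fintype ι] [Nonempty ι] {f : ι → K}
    (hf : ∀ j, ‖f j‖ < 1) : ‖∏ j, f j‖ < 1 := by
  obtain ⟨j₀⟩ := ‹Nonempty ι›
  rw [norm_prod, ← Finset.mul_prod_erase _ _ (Finset.mem_univ j₀)]
  exact mul_lt_one_of_nonneg_of_lt_one_left (norm_nonneg _) (hf j₀)
    (Finset.prod_le_one (fun _ _ => norm_nonneg _) fun j _ => (hf j).le)

lemma MvPowerSeries.not_isUnit_of_norm_constantCoeff_lt_one {σ : Type*}
    (hO : ∀ x ∈ O, ‖x‖ ≤ 1) {G : MvPowerSeries σ O}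
    (hG : ‖((constantCoeff G : O) : K)‖ < 1) : ¬ IsUnit G := by
  intro hu
  obtain ⟨v, hv⟩ := isUnit_iff_exists_inv.mp (hu.map constantCoeff)
  have := congrArg (fun x : O => ‖(x : K)‖) hv
  simp only [Subring.coe_mul, norm_mul, OneMemClass.coe_one, norm_one] at this
  nlinarith [hO v v.2, norm_nonneg ((constantCoeff G : O) : K), norm_nonneg (v : K)]

end IntegralSubring

section UnitBall

open MvPowerSeries

variable {K : Type*} [NormedField K] [IsUltrametricDist K]

local notation "𝒪" => Valuation.integer (NormedField.valuation (K := K))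

lemma NormedField.mem_integer_valuation_iff {x : K} : x ∈ 𝒪 ↔ ‖x‖ ≤ 1 := by
  simp [Valuation.mem_integer_iff, ← NNReal.coe_le_coe]

lemma NormedField.norm_integer_le_one (x : 𝒪) : ‖x‖ ≤ 1 :=
  NormedField.mem_integer_valuation_iff.mp x.2

instance : IsLinearTopology 𝒪 𝒪 :=
  Subring.isLinearTopology_of_norm_le_one _ fun _ => NormedField.mem_integer_valuation_iff.mp

instance [CompleteSpace K] : CompleteSpace 𝒪 := by
  have : IsClosed ((𝒪 : Subring K) : Set K) := by
    convert Metric.isClosed_closedBall (x := (0 : K)) (ε := 1)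
    ext x
    simp [NormedField.mem_integer_valuation_iff]
  exact this.completeSpace_coe

/-- Writing `x = y + 1`, the binomial expansion gives `y ^ p ^ k = p * y * r` with `r`
integral, so `‖y‖ ^ p ^ k ≤ ‖p‖ < 1`. -/
theorem norm_sub_one_lt_one_of_pow_eq_one {p : ℕ} (hp : p.Prime) (hpK : ‖(p : K)‖ < 1)
    {x : K} {k : ℕ} (hx : x ^ p ^ k = 1) : ‖x - 1‖ < 1 := by
  have hpk : p ^ k ≠ 0 := pow_ne_zero k hp.ne_zero
  have hx1 : ‖x‖ = 1 :=
    (pow_eq_one_iff_of_nonneg (norm_nonneg x) hpk).mp (by rw [← norm_pow, hx, norm_one])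
  have hy : x - 1 ∈ 𝒪 := NormedField.mem_integer_valuation_iff.mpr <|
    (sub_eq_add_neg x 1 ▸ IsUltrametricDist.norm_add_le_max x (-1)).trans (by simp [hx1])
  set y : 𝒪 := ⟨x - 1, hy⟩
  obtain ⟨r, hr⟩ := exists_add_pow_prime_pow_eq hp y 1 k
  have hy1 : (y + 1) ^ p ^ k = 1 := Subtype.val_injective (by simp [y, hx])
  have hyr : y ^ p ^ k = -(p * y * r) := by linear_combination hy1 - hr
  have : ‖y‖ ^ p ^ k < 1 := calc
    ‖y‖ ^ p ^ k = ‖(p : 𝒪)‖ * ‖y‖ * ‖r‖ := by rw [← norm_pow, hyr, norm_neg, norm_mul, norm_mul]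
    _ ≤ ‖(p : 𝒪)‖ * 1 * 1 := by
      gcongr <;> exact NormedField.norm_integer_le_one _
    _ < 1 := by simpa using hpK
  exact (pow_lt_one_iff_of_nonneg (norm_nonneg y) hpk).mp this

variable [CompleteSpace K]

lemma NormedField.isUnit_of_norm_sub_one_lt_one {u : 𝒪} (hu : ‖u - 1‖ < 1) : IsUnit u :=
  sub_sub_self 1 u ▸ (Units.oneSub (1 - u) (by rwa [norm_sub_rev])).isUnit

lemma NormedField.norm_inverse_sub_one_lt_one {u : 𝒪} (hu : ‖u - 1‖ < 1) :
    ‖Ring.inverse u - 1‖ < 1 := by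
  have : Ring.inverse u - 1 = Ring.inverse u * (1 - u) := by
    rw [mul_sub, mul_one, Ring.inverse_mul_cancel _ (isUnit_of_norm_sub_one_lt_one hu)]
  rw [this]
  calc ‖Ring.inverse u * (1 - u)‖ ≤ 1 * ‖u - 1‖ := by
        rw [norm_sub_rev u 1]
        exact (norm_mul_le _ _).trans (by gcongr; exact norm_integer_le_one _)
    _ < 1 := by rwa [one_mul]

theorem prod_translate_dvd_of_dvd_pow {σ : Type*} [DecidableEq σ] {i : σ}
    {B : MvPowerSeries σ 𝒪} (hB : IndepOf i B) (hB0 : constantCoeff B = 1)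
    {ι : Type*} [Fintype ι] {u : ι → 𝒪} (hu : Function.Injective u) (hu1 : ∀ j, ‖u j - 1‖ < 1)
    {f : MvPowerSeries σ 𝒪} {n : ℕ} (hdvd : ∏ j, (B - C (u j) * (X i + 1)) ∣ f ^ n) :
    ∏ j, (B - C (u j) * (X i + 1)) ∣ f := by
  have hunit : ∀ j, IsUnit (u j) := fun j => NormedField.isUnit_of_norm_sub_one_lt_one (hu1 j)
  set k : ι → MvPowerSeries σ 𝒪 := fun j => C (Ring.inverse (u j)) * B - 1
  have hfac : ∏ j, (B - C (u j) * (X i + 1)) = (∏ j, -C (u j)) * ∏ j, (X i - k j) := by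
    rw [← Finset.prod_mul_distrib]
    refine Finset.prod_congr rfl fun j _ => ?_
    have : C (u j) * C (Ring.inverse (u j)) = (1 : MvPowerSeries σ 𝒪) := by
      rw [← map_mul, Ring.mul_inverse_cancel _ (hunit j), map_one]
    linear_combination (-B) * this
  have hprefactor : IsUnit (∏ j, -C (u j) : MvPowerSeries σ 𝒪) :=
    IsUnit.prod_univ_iff.mpr fun j => ((hunit j).map C).neg
  have hk_indep : ∀ j, IndepOf i (k j) := fun j d hd => by
    have hd0 : d ≠ 0 := fun h => hd (by simp [h])
    simp [k, coeff_C_mul, hB d hd, coeff_one, hd0]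
  have hk_const : ∀ j, constantCoeff (k j) = Ring.inverse (u j) - 1 := fun j => by
    simp [k, hB0]
  have hk_inj : Function.Injective k := fun j j' h => by
    have := congrArg constantCoeff h
    rw [hk_const, hk_const, sub_left_inj] at this
    exact hu (by rw [← Ring.inverse_inverse (hunit j), this, Ring.inverse_inverse (hunit j')])
  have hk_nil : ∀ j, IsTopologicallyNilpotent (constantCoeff (k j)) := fun j => by
    rw [hk_const]
    exact tendsto_pow_atTop_nhds_zero_of_norm_lt_one
      (NormedField.norm_inverse_sub_one_lt_one (hu1 j))
  rw [hfac, hprefactor.mul_left_dvd] at hdvd ⊢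
  exact prod_X_sub_dvd_of_dvd_pow hk_inj hk_indep hk_nil hdvd

theorem exists_mul_eq_prod_translate_of_pow_eq {σ : Type*} [DecidableEq σ] {i : σ}
    (O : Subring K) (hO : ∀ x ∈ O, ‖x‖ ≤ 1)
    (hval : ∀ x y : K, x ∈ O → y ∈ O → y ≠ 0 → ‖x‖ ≤ ‖y‖ → x / y ∈ O)
    {B : MvPowerSeries σ K} (hB : IndepOf i B) (hB0 : constantCoeff B = 1)
    (hB1 : ∀ d, ‖coeff d B‖ ≤ 1) {ι : Type*} [Fintype ι] {ξ : ι → K}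
    (hξ : Function.Injective ξ) (hξ1 : ∀ j, ‖ξ j - 1‖ < 1)
    {φ Θ : MvPowerSeries σ O} (hφ : φ ≠ 0) {n : ℕ}
    (heq : map O.subtype (φ ^ n) = (∏ j, (B - C (ξ j) * (X i + 1))) * map O.subtype Θ) :
    ∃ G Ψ : MvPowerSeries σ O, φ = G * Ψ ∧ map O.subtype G = ∏ j, (B - C (ξ j) * (X i + 1)) := by
  have hO𝒪 : O ≤ 𝒪 := fun x hx => NormedField.mem_integer_valuation_iff.mpr (hO x hx)
  have hmap : ∀ F : MvPowerSeries σ O, map (𝒪).subtype (map (Subring.inclusion hO𝒪) F) =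
      map O.subtype F := fun F => by ext; simp [coeff_map]
  have hinj := map_injective (σ := σ) (𝒪).subtype Subtype.val_injective
  obtain ⟨B', rfl⟩ := exists_map_subtype_eq 𝒪 fun d =>
    NormedField.mem_integer_valuation_iff.mpr (hB1 d)
  have hξ𝒪 : ∀ j, ξ j ∈ 𝒪 := fun j => NormedField.mem_integer_valuation_iff.mpr <| calc
    ‖ξ j‖ = ‖(ξ j - 1) + 1‖ := by rw [sub_add_cancel]
    _ ≤ max ‖ξ j - 1‖ ‖(1 : K)‖ := IsUltrametricDist.norm_add_le_max _ _
    _ ≤ 1 := max_le (hξ1 j).le norm_one.le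
  set u : ι → 𝒪 := fun j => ⟨ξ j, hξ𝒪 j⟩
  have hprod : map (𝒪).subtype (∏ j, (B' - C (u j) * (X i + 1))) =
      ∏ j, (map (𝒪).subtype B' - C (ξ j) * (X i + 1)) := by
    simp [map_prod, u]
  obtain ⟨Q, hQ⟩ : ∏ j, (B' - C (u j) * (X i + 1)) ∣ map (Subring.inclusion hO𝒪) φ := by
    have hB'indep : IndepOf i B' := fun d hd => Subtype.val_injective (by
      simpa [coeff_map] using hB d hd)
    have hB'0 : constantCoeff B' = 1 := Subtype.val_injective (by
      simpa [constantCoeff_map] using hB0)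
    have hpow : ∏ j, (B' - C (u j) * (X i + 1)) ∣ map (Subring.inclusion hO𝒪) φ ^ n :=
      ⟨map (Subring.inclusion hO𝒪) Θ, hinj (by rw [map_mul, hprod, ← map_pow, hmap, hmap, heq])⟩
    exact prod_translate_dvd_of_dvd_pow hB'indep hB'0 (fun j j' h => hξ (congrArg Subtype.val h))
      hξ1 hpow
  refine exists_mul_eq_map_of_mul_eq O hval hφ heq (Q := map (𝒪).subtype Q) ?_ ?_ ?_
  · rw [← hmap, hQ, map_mul, hprod]
  · exact fun d => by rw [← hprod, coeff_map]; exact NormedField.norm_integer_le_one _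
  · exact fun d => by rw [coeff_map]; exact NormedField.norm_integer_le_one _

theorem exists_eq_one_and_eq_prod_translate_mul_unit {σ : Type*} [DecidableEq σ] {i : σ}
    (O : Subring K) (hO : ∀ x ∈ O, ‖x‖ ≤ 1)
    (hval : ∀ x y : K, x ∈ O → y ∈ O → y ≠ 0 → ‖x‖ ≤ ‖y‖ → x / y ∈ O)
    {B : MvPowerSeries σ K} (hB : IndepOf i B) (hB0 : constantCoeff B = 1)
    (hB1 : ∀ d, ‖coeff d B‖ ≤ 1) {ι : Type*} [Fintype ι] [Nonempty ι] {ξ : ι → K}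
    (hξ : Function.Injective ξ) (hξ1 : ∀ j, ‖ξ j - 1‖ < 1)
    {φ Θ : MvPowerSeries σ O} (hirr : Irreducible φ) (h00 : constantCoeff φ = 0) {n : ℕ}
    (heq : map O.subtype (φ ^ n) = (∏ j, (B - C (ξ j) * (X i + 1))) * map O.subtype Θ) :
    (∃ j, ξ j = 1) ∧ ∃ u : (MvPowerSeries σ O)ˣ,
      map O.subtype φ =
        (∏ j, (B - C (ξ j) * (X i + 1))) * map O.subtype (u : MvPowerSeries σ O) := by
  obtain ⟨G, Ψ, hfac, hG⟩ :=
    exists_mul_eq_prod_translate_of_pow_eq O hO hval hB hB0 hB1 hξ hξ1 hirr.ne_zero heq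
  have hG0 : ((constantCoeff G : O) : K) = ∏ j, (1 - ξ j) := by
    have := congrArg constantCoeff hG
    rw [constantCoeff_map, map_prod] at this
    simpa [hB0] using this
  have hΨ : IsUnit Ψ := (hirr.isUnit_or_isUnit hfac).resolve_left <|
    not_isUnit_of_norm_constantCoeff_lt_one O hO <| hG0 ▸ norm_prod_lt_one fun j => by
      rw [norm_sub_rev]; exact hξ1 j
  have hGzero : constantCoeff G = 0 :=
    (hΨ.map constantCoeff).mul_left_eq_zero.mp (by rw [← map_mul, ← hfac, h00])
  obtain ⟨j, -, hj⟩ : ∃ j ∈ Finset.univ, 1 - ξ j = 0 :=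
    Finset.prod_eq_zero_iff.mp (by rw [← hG0, hGzero]; rfl)
  exact ⟨⟨j, (sub_eq_zero.mp hj).symm⟩, hΨ.unit, by rw [hfac, map_mul, hG]; rfl⟩

end UnitBall

section Binomial

open MvPowerSeries

variable {p : ℕ} [Fact p.Prime]

theorem binomCoeff_eq_choose (m : ℤ_[p]) (i : ℕ) :
    binomCoeff m i = (Ring.choose m i : ℤ_[p]) := by
  have : ((Ring.choose m i : ℤ_[p]) : ℚ_[p]) = Ring.choose (m : ℚ_[p]) i :=
    Ring.map_choose (PadicInt.Coe.ringHom (p := p)) m i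
  rw [this, Ring.choose_eq_smul, ← Polynomial.aeval_eq_smeval, Polynomial.aeval_def,
    Polynomial.eval₂_eq_eval_map, descPochhammer_map, descPochhammer_eval_eq_prod_range,
    binomCoeff, smul_eq_mul, div_eq_inv_mul]

variable {K : Type*} [NormedField K] [Algebra ℚ_[p] K]

theorem indepOf_binomX (m : ℤ_[p]) : IndepOf 1 (binomX m : MvPowerSeries (Fin 2) K) :=
  fun _ hd => if_neg hd

theorem constantCoeff_binomX (m : ℤ_[p]) :
    constantCoeff (binomX m : MvPowerSeries (Fin 2) K) = 1 := by
  rw [← coeff_zero_eq_constantCoeff_apply]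
  simp [binomX, binomCoeff, coeff_apply]

theorem norm_coeff_binomX_le_one (hiso : ∀ a : ℚ_[p], ‖algebraMap ℚ_[p] K a‖ = ‖a‖)
    (m : ℤ_[p]) (d : Fin 2 →₀ ℕ) : ‖coeff d (binomX m : MvPowerSeries (Fin 2) K)‖ ≤ 1 := by
  change ‖binomX m d‖ ≤ 1
  rw [binomX]
  split_ifs
  · rw [hiso, binomCoeff_eq_choose]
    exact PadicInt.norm_le_one _
  · simp

end Binomial

theorem galois_norm_factorization_forces_trivial_translate_general
    {p : ℕ} [Fact p.Prime]
    {K : Type*} [NormedField K] [IsUltrametricDist K] [CompleteSpace K]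
    [Algebra ℚ_[p] K] (hiso : ∀ a : ℚ_[p], ‖algebraMap ℚ_[p] K a‖ = ‖a‖)
    (O : Subring K) (hO : ∀ x ∈ O, ‖x‖ ≤ 1)
    (hval : ∀ x y : K, x ∈ O → y ∈ O → y ≠ 0 → ‖x‖ ≤ ‖y‖ → x / y ∈ O)
    (g : ℕ) (hg : 0 < g)
    (ξ : K) (hξroot : ∃ k : ℕ, ξ ^ p ^ k = 1)
    (m : ℤ_[p])
    (φ : MvPowerSeries (Fin 2) O)
    (hirr : Irreducible φ)
    (h00 : MvPowerSeries.constantCoeff φ = 0)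
    (ξs : Fin g → K) (hξsinj : Function.Injective ξs)
    (hconj : ∀ j, ∃ σ : K ≃+* K, (∀ x ∈ O, σ x = x) ∧ σ ξ = ξs j)
    (Θ : MvPowerSeries (Fin 2) O)
    (heq : MvPowerSeries.map O.subtype (φ ^ g) =
      (∏ j, (binomX m - (MvPowerSeries.C (ξs j) : MvPowerSeries (Fin 2) K) * yPlusOne)) *
        MvPowerSeries.map O.subtype Θ) :
    ξ = 1 ∧ g = 1 ∧
      ∃ u : (MvPowerSeries (Fin 2) O)ˣ,
        MvPowerSeries.map O.subtype φ =
          (binomX m - yPlusOne) *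
            MvPowerSeries.map O.subtype (↑u : MvPowerSeries (Fin 2) O) := by
  have hpK : ‖(p : K)‖ < 1 := by
    rw [← map_natCast (algebraMap ℚ_[p] K), hiso]
    exact Padic.norm_p_lt_one
  obtain ⟨k, hk⟩ := hξroot
  have hξs1 : ∀ j, ‖ξs j - 1‖ < 1 := fun j => by
    obtain ⟨σ, -, hσ⟩ := hconj j
    exact norm_sub_one_lt_one_of_pow_eq_one Fact.out hpK (k := k)
      (by rw [← hσ, ← map_pow, hk, map_one])
  have : Nonempty (Fin g) := ⟨⟨0, hg⟩⟩
  obtain ⟨⟨j, hj⟩, u, hu⟩ := exists_eq_one_and_eq_prod_translate_mul_unit O hO hval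
    (indepOf_binomX m) (constantCoeff_binomX m) (norm_coeff_binomX_le_one hiso m) hξsinj hξs1
    hirr h00 heq
  have hξ : ξ = 1 := by
    obtain ⟨σ, -, hσ⟩ := hconj j
    exact σ.injective (by rw [hσ, hj, map_one])
  have hξs : ∀ j, ξs j = 1 := fun j => by
    obtain ⟨σ, -, hσ⟩ := hconj j
    rw [← hσ, hξ, map_one]
  obtain rfl : g = 1 := le_antisymm
    (Fin.subsingleton_iff_le_one.mp ⟨fun a b => hξsinj (by rw [hξs a, hξs b])⟩) hg
  refine ⟨hξ, rfl, u, ?_⟩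
  rw [hu, Fin.prod_univ_one, hξs, map_one, one_mul]
  rfl

/-- Let `g ≥ 1`, `ξ` a (`p`-power) root of unity whose `g`
distinct conjugates over `F` are `ξs 0, …, ξs (g-1)` (so that `F[ξ]/F` is Galois of
degree `g`), `m ∈ ℤ_p`, and `φ ∈ O_F[[X,Y]]` irreducible with `φ(0,0) = 0`.  If
`φ(X,Y)^g = (∏_σ ((X+1)^m - σ(ξ)(Y+1))) · Θ(X,Y)` for some `Θ ∈ O_F[[X,Y]]`, then
`ξ = 1`, `g = 1`, and `φ` is a unit multiple of `(X+1)^m - (Y+1)`. -/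
theorem galois_norm_factorization_forces_trivial_translate
    {p : ℕ} [Fact p.Prime]
    {K : Type*} [NormedField K] [IsUltrametricDist K] [CompleteSpace K]
    [Algebra ℚ_[p] K] (hiso : ∀ a : ℚ_[p], ‖algebraMap ℚ_[p] K a‖ = ‖a‖)
    (O : Subring K) (hO : ∀ x ∈ O, ‖x‖ ≤ 1)
    (hval : ∀ x y : K, x ∈ O → y ∈ O → y ≠ 0 → ‖x‖ ≤ ‖y‖ → x / y ∈ O)
    (π : K) (hπO : π ∈ O) (hπ0 : 0 < ‖π‖) (hπ1 : ‖π‖ < 1)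
    (hunif : ∀ x ∈ O, ‖x‖ < 1 → ‖x‖ ≤ ‖π‖)
    (g : ℕ) (hg : 0 < g)
    (ξ : K) (hξroot : ∃ k : ℕ, ξ ^ p ^ k = 1)
    (m : ℤ_[p])
    (φ : MvPowerSeries (Fin 2) O)
    (hirr : Irreducible φ)
    (h00 : MvPowerSeries.constantCoeff φ = 0)
    (ξs : Fin g → K) (hξsinj : Function.Injective ξs) (hξ0 : ∃ j, ξs j = ξ)
    (hconj : ∀ j, ∃ σ : K ≃+* K, (∀ x ∈ O, σ x = x) ∧ σ ξ = ξs j)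
    (Θ : MvPowerSeries (Fin 2) O)
    (heq : MvPowerSeries.map O.subtype (φ ^ g) =
      (∏ j, (binomX m - (MvPowerSeries.C (ξs j) : MvPowerSeries (Fin 2) K) * yPlusOne)) *
        MvPowerSeries.map O.subtype Θ) :
    ξ = 1 ∧ g = 1 ∧
      ∃ u : (MvPowerSeries (Fin 2) O)ˣ,
        MvPowerSeries.map O.subtype φ =
          (binomX m - yPlusOne) *
            MvPowerSeries.map O.subtype (↑u : MvPowerSeries (Fin 2) O) :=
  galois_norm_factorization_forces_trivial_translate_general hiso O hO hval g hg ξ hξroot m φ hirr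
    h00 ξs hξsinj hconj Θ heq
end
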